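/- Let x, y, a, b be real numbers with |x + y - a - b| ≤ 2ε₁ and |(x - y)² - (a - b)²| ≤ 4ε₂, where ε₁, ε₂ ≥ 0. Then there exists a permutation π of {1,2} such that, writing (μ̂₁, μ̂₂) = (x, y) and (μ₁, μ₂) = (a, b), we have |μ̂ᵢ - μ_{π(i)}| ≤ 2ε₁ + 2√ε₂ for i = 1, 2. -/
import Mathlib

theorem method_of_moments_recovery (x y a b ε1 ε2 : ℝ) (hε1 : 0 ≤ ε1) (hε2 : 0 ≤ ε2)
    (h1 : |x + y - a - b| ≤ 2 * ε1)
    (h2 : |(x - y)^2 - (a - b)^2| ≤ 4 * ε2) :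
    ∃ π : Equiv.Perm (Fin 2),
      ∀ i : Fin 2, |![x, y] i - ![a, b] (π i)| ≤ 2 * ε1 + 2 * Real.sqrt ε2 := by
  have hs : 0 ≤ Real.sqrt ε2 := Real.sqrt_nonneg _
  have hsq : Real.sqrt ε2 * Real.sqrt ε2 = ε2 := Real.mul_self_sqrt hε2
  have hfac : |(x - y) - (a - b)| * |(x - y) + (a - b)| ≤ 4 * ε2 := by
    rw [← abs_mul]
    have : ((x - y) - (a - b)) * ((x - y) + (a - b)) = (x - y)^2 - (a - b)^2 := by ring
    rw [this]; exact h2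
  have hkey : |(x - y) - (a - b)| ≤ 2 * Real.sqrt ε2 ∨
      |(x - y) + (a - b)| ≤ 2 * Real.sqrt ε2 := by
    by_contra h
    push_neg at h
    obtain ⟨hu, hv⟩ := h
    have : (2 * Real.sqrt ε2) * (2 * Real.sqrt ε2) <
        |(x - y) - (a - b)| * |(x - y) + (a - b)| :=
      mul_lt_mul'' hu hv (by positivity) (by positivity)
    nlinarith
  rcases hkey with h | h
  · refine ⟨Equiv.refl _, fun i => ?_⟩
    have hxa : |x - a| ≤ ε1 + Real.sqrt ε2 := by
      have : x - a = ((x + y - a - b) + ((x - y) - (a - b))) / 2 := by ring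
      rw [this]
      calc |((x + y - a - b) + ((x - y) - (a - b))) / 2|
          ≤ (|x + y - a - b| + |(x - y) - (a - b)|) / 2 := by
            rw [abs_div]; simp [abs_of_nonneg]
            exact div_le_div_of_nonneg_right (abs_add_le _ _) (by norm_num)
        _ ≤ ε1 + Real.sqrt ε2 := by linarith
    have hyb : |y - b| ≤ ε1 + Real.sqrt ε2 := by
      have : y - b = ((x + y - a - b) - ((x - y) - (a - b))) / 2 := by ring
      rw [this]
      calc |((x + y - a - b) - ((x - y) - (a - b))) / 2|
          ≤ (|x + y - a - b| + |(x - y) - (a - b)|) / 2 := by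
            rw [abs_div]; simp [abs_of_nonneg]
            exact div_le_div_of_nonneg_right (abs_sub _ _) (by norm_num)
        _ ≤ ε1 + Real.sqrt ε2 := by linarith
    fin_cases i <;> simp <;> linarith
  · refine ⟨Equiv.swap 0 1, fun i => ?_⟩
    have hxb : |x - b| ≤ ε1 + Real.sqrt ε2 := by
      have : x - b = ((x + y - a - b) + ((x - y) + (a - b))) / 2 := by ring
      rw [this]
      calc |((x + y - a - b) + ((x - y) + (a - b))) / 2|
          ≤ (|x + y - a - b| + |(x - y) + (a - b)|) / 2 := by
            rw [abs_div]; simp [abs_of_nonneg]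
            exact div_le_div_of_nonneg_right (abs_add_le _ _) (by norm_num)
        _ ≤ ε1 + Real.sqrt ε2 := by linarith
    have hya : |y - a| ≤ ε1 + Real.sqrt ε2 := by
      have : y - a = ((x + y - a - b) - ((x - y) + (a - b))) / 2 := by ring
      rw [this]
      calc |((x + y - a - b) - ((x - y) + (a - b))) / 2|
          ≤ (|x + y - a - b| + |(x - y) + (a - b)|) / 2 := by
            rw [abs_div]; simp [abs_of_nonneg]
            exact div_le_div_of_nonneg_right (abs_sub _ _) (by norm_num)
        _ ≤ ε1 + Real.sqrt ε2 := by linarith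
    fin_cases i <;> simp [Equiv.swap_apply_def] <;> linarith
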